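/- Let z, r : ℝ × ℝ → ℂ be smooth functions solving the Mikhailov–Lenells system. Define u = −(3/2 + (3√3/2)i) z + (−3/2 + (3√3/2)i) r and v = (3/2 − (3√3/2)i) z² + (3/2 + (3√3/2)i) r² − 3 z r − √3 i z_x + √3 i r_x. Then (u, v) solves the (complex-valued) Hirota–Satsuma system: u_t = −u_{xx} + (2/3) u u_x + 2 v_x and v_t = −(2/3) u_{xxx} + (2/3) u u_{xx} + (2/3) u_x v − (2/3) u v_x + v_{xx}. -/

import Mathlib

open Complex

/-- Partial derivative in the first (space) variable, for complex-valued functions. -/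
noncomputable def pdx (f : ℝ → ℝ → ℂ) : ℝ → ℝ → ℂ := fun x t => deriv (fun x' => f x' t) x

/-- Partial derivative in the second (time) variable, for complex-valued functions. -/
noncomputable def pdt (f : ℝ → ℝ → ℂ) : ℝ → ℝ → ℂ := fun x t => deriv (fun t' => f x t') t

/-- The Mikhailov–Lenells system for complex-valued functions z, r. -/
def MikhailovLenells (z r : ℝ → ℝ → ℂ) : Prop :=
  ∀ x t : ℝ,
    I * pdt z x t + ((Real.sqrt 3 : ℂ)/3) * pdx (pdx z) x t
      + 2 * I * r x t * pdx r x t = 0 ∧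
    I * pdt r x t - ((Real.sqrt 3 : ℂ)/3) * pdx (pdx r) x t
      + 2 * I * z x t * pdx z x t = 0

/-- The (complex-valued) Hirota–Satsuma system. -/
def HirotaSatsumaC (u v : ℝ → ℝ → ℂ) : Prop :=
  ∀ x t : ℝ,
    pdt u x t = -(pdx (pdx u) x t) + (2/3) * u x t * pdx u x t + 2 * pdx v x t ∧
    pdt v x t = -(2/3) * pdx (pdx (pdx u)) x t + (2/3) * u x t * pdx (pdx u) x t
      + (2/3) * pdx u x t * v x t - (2/3) * u x t * pdx v x t + pdx (pdx v) x t

private lemma ml_hda_congr {f : ℝ → ℂ} {v v' : ℂ} {x : ℝ} (h : HasDerivAt f v x)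
    (hv : v = v') : HasDerivAt f v' x := hv ▸ h

private lemma ml_hda_sq {f : ℝ → ℂ} {v : ℂ} {x : ℝ} (h : HasDerivAt f v x) :
    HasDerivAt (fun y => f y ^ 2) (2 * f x * v) x := by
  have h2 : HasDerivAt (fun y => f y * f y) (2 * f x * v) x := ml_hda_congr (h.mul h) (by ring)
  have he : (fun y => f y ^ 2) = fun y => f y * f y := by funext y; ring
  rw [he]
  exact h2

private lemma ml_hasDerivAt_pdx {F : ℝ → ℝ → ℂ}
    (hF : ContDiff ℝ (⊤ : ℕ∞) (fun s : ℝ × ℝ => F s.1 s.2)) (x t : ℝ) :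
    HasDerivAt (fun x' => F x' t) (pdx F x t) x := by
  have hd : DifferentiableAt ℝ (fun x' => F x' t) x := by
    have := (hF.differentiable (by simp)).comp
      ((differentiable_id.prodMk (differentiable_const t)) : Differentiable ℝ fun x' : ℝ => ((x', t) : ℝ × ℝ))
    exact this.differentiableAt
  exact hd.hasDerivAt

private lemma ml_hasDerivAt_pdt {F : ℝ → ℝ → ℂ}
    (hF : ContDiff ℝ (⊤ : ℕ∞) (fun s : ℝ × ℝ => F s.1 s.2)) (x t : ℝ) :
    HasDerivAt (fun t' => F x t') (pdt F x t) t := by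
  have hd : DifferentiableAt ℝ (fun t' => F x t') t := by
    have := (hF.differentiable (by simp)).comp
      (((differentiable_const x).prodMk differentiable_id) : Differentiable ℝ fun t' : ℝ => ((x, t') : ℝ × ℝ))
    exact this.differentiableAt
  exact hd.hasDerivAt

private lemma ml_pdx_eq_fderiv {F : ℝ → ℝ → ℂ}
    (hF : ContDiff ℝ (⊤ : ℕ∞) (fun s : ℝ × ℝ => F s.1 s.2)) (x t : ℝ) :
    pdx F x t = fderiv ℝ (fun s : ℝ × ℝ => F s.1 s.2) (x, t) (1, 0) := by
  have h1 : HasDerivAt (fun x' : ℝ => ((x', t) : ℝ × ℝ)) ((1 : ℝ), (0 : ℝ)) x :=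
    (hasDerivAt_id x).prodMk (hasDerivAt_const x t)
  have h2 := ((hF.differentiable (by simp) (x, t)).hasFDerivAt).comp_hasDerivAt x h1
  exact h2.deriv

private lemma ml_pdt_eq_fderiv {F : ℝ → ℝ → ℂ}
    (hF : ContDiff ℝ (⊤ : ℕ∞) (fun s : ℝ × ℝ => F s.1 s.2)) (x t : ℝ) :
    pdt F x t = fderiv ℝ (fun s : ℝ × ℝ => F s.1 s.2) (x, t) (0, 1) := by
  have h1 : HasDerivAt (fun t' : ℝ => ((x, t') : ℝ × ℝ)) ((0 : ℝ), (1 : ℝ)) t :=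
    (hasDerivAt_const t x).prodMk (hasDerivAt_id t)
  have h2 := ((hF.differentiable (by simp) (x, t)).hasFDerivAt).comp_hasDerivAt t h1
  exact h2.deriv

private lemma ml_contDiff_pdx {F : ℝ → ℝ → ℂ}
    (hF : ContDiff ℝ (⊤ : ℕ∞) (fun s : ℝ × ℝ => F s.1 s.2)) :
    ContDiff ℝ (⊤ : ℕ∞) (fun s : ℝ × ℝ => pdx F s.1 s.2) := by
  have he : (fun s : ℝ × ℝ => pdx F s.1 s.2)
      = fun s : ℝ × ℝ => fderiv ℝ (fun s : ℝ × ℝ => F s.1 s.2) s (1, 0) := by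
    funext s
    simpa using ml_pdx_eq_fderiv hF s.1 s.2
  rw [he]
  exact (hF.fderiv_right (by simp)).clm_apply contDiff_const

private lemma ml_contDiff_pdt {F : ℝ → ℝ → ℂ}
    (hF : ContDiff ℝ (⊤ : ℕ∞) (fun s : ℝ × ℝ => F s.1 s.2)) :
    ContDiff ℝ (⊤ : ℕ∞) (fun s : ℝ × ℝ => pdt F s.1 s.2) := by
  have he : (fun s : ℝ × ℝ => pdt F s.1 s.2)
      = fun s : ℝ × ℝ => fderiv ℝ (fun s : ℝ × ℝ => F s.1 s.2) s (0, 1) := by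
    funext s
    simpa using ml_pdt_eq_fderiv hF s.1 s.2
  rw [he]
  exact (hF.fderiv_right (by simp)).clm_apply contDiff_const

private lemma ml_pdt_pdx_comm {F : ℝ → ℝ → ℂ}
    (hF : ContDiff ℝ (⊤ : ℕ∞) (fun s : ℝ × ℝ => F s.1 s.2)) (x t : ℝ) :
    pdt (pdx F) x t = pdx (pdt F) x t := by
  have hff : ContDiff ℝ (⊤ : ℕ∞) (fderiv ℝ (fun s : ℝ × ℝ => F s.1 s.2)) := hF.fderiv_right (by simp)
  have key : ∀ v w : ℝ × ℝ,
      fderiv ℝ (fun s : ℝ × ℝ => fderiv ℝ (fun s : ℝ × ℝ => F s.1 s.2) s v) (x, t) w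
        = fderiv ℝ (fderiv ℝ (fun s : ℝ × ℝ => F s.1 s.2)) (x, t) w v := by
    intro v w
    have hd : HasFDerivAt (fun s : ℝ × ℝ => fderiv ℝ (fun s : ℝ × ℝ => F s.1 s.2) s v)
        ((ContinuousLinearMap.apply ℝ ℂ v).comp
          (fderiv ℝ (fderiv ℝ (fun s : ℝ × ℝ => F s.1 s.2)) (x, t))) (x, t) :=
      (ContinuousLinearMap.apply ℝ ℂ v).hasFDerivAt.comp (x, t)
        ((hff.differentiable (by simp) (x, t)).hasFDerivAt)
    rw [hd.fderiv]
    rfl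
  have hsymm : IsSymmSndFDerivAt ℝ (fun s : ℝ × ℝ => F s.1 s.2) (x, t) :=
    hF.contDiffAt.isSymmSndFDerivAt (by rw [minSmoothness_of_isRCLikeNormedField]; exact WithTop.coe_le_coe.mpr le_top)
  have e1 : pdt (pdx F) x t
      = fderiv ℝ (fderiv ℝ (fun s : ℝ × ℝ => F s.1 s.2)) (x, t) (0, 1) (1, 0) := by
    rw [ml_pdt_eq_fderiv (ml_contDiff_pdx hF) x t]
    have he : (fun s : ℝ × ℝ => pdx F s.1 s.2)
        = fun s : ℝ × ℝ => fderiv ℝ (fun s : ℝ × ℝ => F s.1 s.2) s (1, 0) := by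
      funext s
      simpa using ml_pdx_eq_fderiv hF s.1 s.2
    rw [he, key]
  have e2 : pdx (pdt F) x t
      = fderiv ℝ (fderiv ℝ (fun s : ℝ × ℝ => F s.1 s.2)) (x, t) (1, 0) (0, 1) := by
    rw [ml_pdx_eq_fderiv (ml_contDiff_pdt hF) x t]
    have he : (fun s : ℝ × ℝ => pdt F s.1 s.2)
        = fun s : ℝ × ℝ => fderiv ℝ (fun s : ℝ × ℝ => F s.1 s.2) s (0, 1) := by
      funext s
      simpa using ml_pdt_eq_fderiv hF s.1 s.2
    rw [he, key]
  rw [e1, e2]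
  exact hsymm _ _

/-- The Miura transformation from the Mikhailov–Lenells system to the
Hirota–Satsuma system. -/
theorem miura_ML_to_HS (z r : ℝ → ℝ → ℂ)
    (hz : ContDiff ℝ (⊤ : ℕ∞) (fun s : ℝ × ℝ => z s.1 s.2))
    (hr : ContDiff ℝ (⊤ : ℕ∞) (fun s : ℝ × ℝ => r s.1 s.2))
    (hML : MikhailovLenells z r) :
    HirotaSatsumaC
      (fun x t => -(3/2 + (3 * (Real.sqrt 3 : ℂ)/2) * I) * z x t
        + (-(3/2) + (3 * (Real.sqrt 3 : ℂ)/2) * I) * r x t)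
      (fun x t => (3/2 - (3 * (Real.sqrt 3 : ℂ)/2) * I) * (z x t)^2
        + (3/2 + (3 * (Real.sqrt 3 : ℂ)/2) * I) * (r x t)^2
        - 3 * z x t * r x t - (Real.sqrt 3 : ℂ) * I * pdx z x t
        + (Real.sqrt 3 : ℂ) * I * pdx r x t) := by
  have hzx := ml_contDiff_pdx hz
  have hrx := ml_contDiff_pdx hr
  have hzxx := ml_contDiff_pdx hzx
  have hrxx := ml_contDiff_pdx hrx
  have Dz : ∀ x t : ℝ, HasDerivAt (fun x' => z x' t) (pdx z x t) x :=
    ml_hasDerivAt_pdx hz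
  have Dr : ∀ x t : ℝ, HasDerivAt (fun x' => r x' t) (pdx r x t) x :=
    ml_hasDerivAt_pdx hr
  have Dzx : ∀ x t : ℝ, HasDerivAt (fun x' => pdx z x' t) (pdx (pdx z) x t) x :=
    ml_hasDerivAt_pdx hzx
  have Drx : ∀ x t : ℝ, HasDerivAt (fun x' => pdx r x' t) (pdx (pdx r) x t) x :=
    ml_hasDerivAt_pdx hrx
  have Dzxx : ∀ x t : ℝ, HasDerivAt (fun x' => pdx (pdx z) x' t) (pdx (pdx (pdx z)) x t) x :=
    ml_hasDerivAt_pdx hzxx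
  have Drxx : ∀ x t : ℝ, HasDerivAt (fun x' => pdx (pdx r) x' t) (pdx (pdx (pdx r)) x t) x :=
    ml_hasDerivAt_pdx hrxx
  have Tz : ∀ x t : ℝ, HasDerivAt (fun t' => z x t') (pdt z x t) t :=
    ml_hasDerivAt_pdt hz
  have Tr : ∀ x t : ℝ, HasDerivAt (fun t' => r x t') (pdt r x t) t :=
    ml_hasDerivAt_pdt hr
  have Tzx : ∀ x t : ℝ, HasDerivAt (fun t' => pdx z x t') (pdt (pdx z) x t) t :=
    ml_hasDerivAt_pdt hzx
  have Trx : ∀ x t : ℝ, HasDerivAt (fun t' => pdx r x t') (pdt (pdx r) x t) t :=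
    ml_hasDerivAt_pdt hrx
  have hs3 : (Real.sqrt 3 : ℂ)^2 = 3 := by
    rw [← Complex.ofReal_pow, Real.sq_sqrt (by norm_num : (0:ℝ) ≤ 3)]
    norm_num
  have hzt : ∀ x t : ℝ, pdt z x t
      = I * ((Real.sqrt 3 : ℂ)/3) * pdx (pdx z) x t - 2 * (r x t * pdx r x t) := by
    intro x t
    have h := (hML x t).1
    linear_combination (-I) * h + (pdt z x t + 2 * (r x t * pdx r x t)) * Complex.I_sq
  have hrt : ∀ x t : ℝ, pdt r x t
      = -(I * ((Real.sqrt 3 : ℂ)/3)) * pdx (pdx r) x t - 2 * (z x t * pdx z x t) := by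
    intro x t
    have h := (hML x t).2
    linear_combination (-I) * h + (pdt r x t + 2 * (z x t * pdx z x t)) * Complex.I_sq
  have hztf : pdt z = fun x t =>
      I * ((Real.sqrt 3 : ℂ)/3) * pdx (pdx z) x t - 2 * (r x t * pdx r x t) :=
    funext fun x => funext fun t => hzt x t
  have hrtf : pdt r = fun x t =>
      -(I * ((Real.sqrt 3 : ℂ)/3)) * pdx (pdx r) x t - 2 * (z x t * pdx z x t) :=
    funext fun x => funext fun t => hrt x t
  have hztx : ∀ x t : ℝ, pdx (pdt z) x t
      = I * ((Real.sqrt 3 : ℂ)/3) * pdx (pdx (pdx z)) x t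
        - 2 * (pdx r x t * pdx r x t + r x t * pdx (pdx r) x t) := by
    intro x t
    rw [hztf]

    exact (ml_hda_congr (((Dzxx x t).const_mul (I * ((Real.sqrt 3 : ℂ)/3))).sub
      (((Dr x t).mul (Drx x t)).const_mul 2)) (by ring)).deriv
  have hrtx : ∀ x t : ℝ, pdx (pdt r) x t
      = -(I * ((Real.sqrt 3 : ℂ)/3)) * pdx (pdx (pdx r)) x t
        - 2 * (pdx z x t * pdx z x t + z x t * pdx (pdx z) x t) := by
    intro x t
    rw [hrtf]

    exact (ml_hda_congr (((Drxx x t).const_mul (-(I * ((Real.sqrt 3 : ℂ)/3)))).sub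
      (((Dz x t).mul (Dzx x t)).const_mul 2)) (by ring)).deriv
  have hU1 : pdx (fun x t => -(3/2 + (3 * (Real.sqrt 3 : ℂ)/2) * I) * z x t + (-(3/2) + (3 * (Real.sqrt 3 : ℂ)/2) * I) * r x t) = fun x t => -(3/2 + (3 * (Real.sqrt 3 : ℂ)/2) * I) * pdx z x t + (-(3/2) + (3 * (Real.sqrt 3 : ℂ)/2) * I) * pdx r x t := by
    funext x t

    exact (ml_hda_congr (((Dz x t).const_mul (-(3/2 + (3 * (Real.sqrt 3 : ℂ)/2) * I))).add
      ((Dr x t).const_mul ((-(3/2) + (3 * (Real.sqrt 3 : ℂ)/2) * I)))) (by ring)).deriv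
  have hU2 : pdx (fun x t => -(3/2 + (3 * (Real.sqrt 3 : ℂ)/2) * I) * pdx z x t + (-(3/2) + (3 * (Real.sqrt 3 : ℂ)/2) * I) * pdx r x t) = fun x t => -(3/2 + (3 * (Real.sqrt 3 : ℂ)/2) * I) * pdx (pdx z) x t + (-(3/2) + (3 * (Real.sqrt 3 : ℂ)/2) * I) * pdx (pdx r) x t := by
    funext x t

    exact (ml_hda_congr (((Dzx x t).const_mul (-(3/2 + (3 * (Real.sqrt 3 : ℂ)/2) * I))).add
      ((Drx x t).const_mul ((-(3/2) + (3 * (Real.sqrt 3 : ℂ)/2) * I)))) (by ring)).deriv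
  have hU3 : pdx (fun x t => -(3/2 + (3 * (Real.sqrt 3 : ℂ)/2) * I) * pdx (pdx z) x t + (-(3/2) + (3 * (Real.sqrt 3 : ℂ)/2) * I) * pdx (pdx r) x t) = fun x t => -(3/2 + (3 * (Real.sqrt 3 : ℂ)/2) * I) * pdx (pdx (pdx z)) x t + (-(3/2) + (3 * (Real.sqrt 3 : ℂ)/2) * I) * pdx (pdx (pdx r)) x t := by
    funext x t

    exact (ml_hda_congr (((Dzxx x t).const_mul (-(3/2 + (3 * (Real.sqrt 3 : ℂ)/2) * I))).add
      ((Drxx x t).const_mul ((-(3/2) + (3 * (Real.sqrt 3 : ℂ)/2) * I)))) (by ring)).deriv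
  have hUt : pdt (fun x t => -(3/2 + (3 * (Real.sqrt 3 : ℂ)/2) * I) * z x t + (-(3/2) + (3 * (Real.sqrt 3 : ℂ)/2) * I) * r x t) = fun x t => -(3/2 + (3 * (Real.sqrt 3 : ℂ)/2) * I) * pdt z x t + (-(3/2) + (3 * (Real.sqrt 3 : ℂ)/2) * I) * pdt r x t := by
    funext x t

    exact (ml_hda_congr (((Tz x t).const_mul (-(3/2 + (3 * (Real.sqrt 3 : ℂ)/2) * I))).add
      ((Tr x t).const_mul ((-(3/2) + (3 * (Real.sqrt 3 : ℂ)/2) * I)))) (by ring)).deriv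
  have hV1 : pdx (fun x t => (3/2 - (3 * (Real.sqrt 3 : ℂ)/2) * I) * (z x t)^2 + (3/2 + (3 * (Real.sqrt 3 : ℂ)/2) * I) * (r x t)^2 - 3 * z x t * r x t - (Real.sqrt 3 : ℂ) * I * pdx z x t + (Real.sqrt 3 : ℂ) * I * pdx r x t) = fun x t => 2 * (3/2 - (3 * (Real.sqrt 3 : ℂ)/2) * I) * (z x t * pdx z x t) + 2 * (3/2 + (3 * (Real.sqrt 3 : ℂ)/2) * I) * (r x t * pdx r x t) - 3 * (pdx z x t * r x t + z x t * pdx r x t) - (Real.sqrt 3 : ℂ) * I * pdx (pdx z) x t + (Real.sqrt 3 : ℂ) * I * pdx (pdx r) x t := by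
    funext x t

    exact (ml_hda_congr (((((((ml_hda_sq (Dz x t)).const_mul (3/2 - (3 * (Real.sqrt 3 : ℂ)/2) * I)).add
      ((ml_hda_sq (Dr x t)).const_mul (3/2 + (3 * (Real.sqrt 3 : ℂ)/2) * I))).sub
      (((Dz x t).const_mul 3).mul (Dr x t))).sub
      ((Dzx x t).const_mul ((Real.sqrt 3 : ℂ) * I))).add
      ((Drx x t).const_mul ((Real.sqrt 3 : ℂ) * I)))) (by ring)).deriv
  have hV2 : pdx (fun x t => 2 * (3/2 - (3 * (Real.sqrt 3 : ℂ)/2) * I) * (z x t * pdx z x t) + 2 * (3/2 + (3 * (Real.sqrt 3 : ℂ)/2) * I) * (r x t * pdx r x t) - 3 * (pdx z x t * r x t + z x t * pdx r x t) - (Real.sqrt 3 : ℂ) * I * pdx (pdx z) x t + (Real.sqrt 3 : ℂ) * I * pdx (pdx r) x t) = fun x t => 2 * (3/2 - (3 * (Real.sqrt 3 : ℂ)/2) * I) * (pdx z x t * pdx z x t + z x t * pdx (pdx z) x t) + 2 * (3/2 + (3 * (Real.sqrt 3 : ℂ)/2) * I) * (pdx r x t * pdx r x t + r x t * pdx (pdx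 r) x t) - 3 * (pdx (pdx z) x t * r x t + 2 * (pdx z x t * pdx r x t) + z x t * pdx (pdx r) x t) - (Real.sqrt 3 : ℂ) * I * pdx (pdx (pdx z)) x t + (Real.sqrt 3 : ℂ) * I * pdx (pdx (pdx r)) x t := by
    funext x t

    exact (ml_hda_congr ((((((((Dz x t).mul (Dzx x t)).const_mul (2 * (3/2 - (3 * (Real.sqrt 3 : ℂ)/2) * I))).add
      (((Dr x t).mul (Drx x t)).const_mul (2 * (3/2 + (3 * (Real.sqrt 3 : ℂ)/2) * I)))).sub
      ((((Dzx x t).mul (Dr x t)).add ((Dz x t).mul (Drx x t))).const_mul 3)).sub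
      ((Dzxx x t).const_mul ((Real.sqrt 3 : ℂ) * I))).add
      ((Drxx x t).const_mul ((Real.sqrt 3 : ℂ) * I)))) (by ring)).deriv
  have hVt : pdt (fun x t => (3/2 - (3 * (Real.sqrt 3 : ℂ)/2) * I) * (z x t)^2 + (3/2 + (3 * (Real.sqrt 3 : ℂ)/2) * I) * (r x t)^2 - 3 * z x t * r x t - (Real.sqrt 3 : ℂ) * I * pdx z x t + (Real.sqrt 3 : ℂ) * I * pdx r x t) = fun x t => 2 * (3/2 - (3 * (Real.sqrt 3 : ℂ)/2) * I) * (z x t * pdt z x t) + 2 * (3/2 + (3 * (Real.sqrt 3 : ℂ)/2) * I) * (r x t * pdt r x t) - 3 * (pdt z x t * r x t + z x t * pdt r x t) - (Real.sqrt 3 : ℂ) * I * pdt (pdx z) x t + (Real.sqrt 3 : ℂ) * I * pdt (pdx r) x t := by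
    funext x t

    exact (ml_hda_congr (((((((ml_hda_sq (Tz x t)).const_mul (3/2 - (3 * (Real.sqrt 3 : ℂ)/2) * I)).add
      ((ml_hda_sq (Tr x t)).const_mul (3/2 + (3 * (Real.sqrt 3 : ℂ)/2) * I))).sub
      (((Tz x t).const_mul 3).mul (Tr x t))).sub
      ((Tzx x t).const_mul ((Real.sqrt 3 : ℂ) * I))).add
      ((Trx x t).const_mul ((Real.sqrt 3 : ℂ) * I)))) (by ring)).deriv
  intro x t
  refine ⟨?_, ?_⟩
  · simp only [hUt, hU1, hU2, hV1]
    rw [hzt, hrt]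
    linear_combination ((1/2) * pdx (pdx r) x t + (1/2) * pdx (pdx z) x t + (3/2) * (r x t * pdx r x t) - (3/2) * (r x t * pdx z x t) - (3/2) * (z x t * pdx r x t) + (3/2) * (z x t * pdx z x t)) * hs3
      - ((1/2) * pdx (pdx r) x t + (1/2) * pdx (pdx z) x t + (3/2) * (r x t * pdx r x t) - (3/2) * (r x t * pdx z x t) - (3/2) * (z x t * pdx r x t) + (3/2) * (z x t * pdx z x t)) * ((Real.sqrt 3 : ℂ) * (Real.sqrt 3 : ℂ)) * Complex.I_sq
  · simp only [hVt, hU1, hU2, hU3, hV1, hV2]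
    rw [ml_pdt_pdx_comm hz x t, ml_pdt_pdx_comm hr x t, hztx, hrtx, hzt, hrt]
    linear_combination ((1/3) * pdx (pdx (pdx r)) x t + (1/3) * pdx (pdx (pdx z)) x t + pdx r x t * pdx r x t - 2 * (pdx z x t * pdx r x t) + pdx z x t * pdx z x t + (3/2) * (r x t * pdx (pdx r) x t) - (1/2) * (r x t * pdx (pdx z) x t) - (3/2) * (r x t * r x t * pdx r x t) - (3/2) * (r x t * r x t * pdx z x t) - (1/2) * (z x t * pdx (pdx r) x t) + (3/2) * (z x t * pdx (pdx z) x t) + 3 * (z x t * r x t * pdx r x t) + 3 * (z x t * r x t * pdx z x t) - (3/2) * (z x t * z x t * pdx r x t) - (3/2) * (z x t * z x t * pdx z x t)) * hs3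
      - ((1/3) * pdx (pdx (pdx r)) x t + (1/3) * pdx (pdx (pdx z)) x t + pdx r x t * pdx r x t - 2 * (pdx z x t * pdx r x t) + pdx z x t * pdx z x t + (3/2) * (r x t * pdx (pdx r) x t) - (1/2) * (r x t * pdx (pdx z) x t) - (3/2) * (r x t * r x t * pdx r x t) - (3/2) * (r x t * r x t * pdx z x t) - (1/2) * (z x t * pdx (pdx r) x t) + (3/2) * (z x t * pdx (pdx z) x t) + 3 * (z x t * r x t * pdx r x t) + 3 * (z x t * r x t * pdx z x t) - (3/2) * (z x t * z x t * pdx r x t) - (3/2) * (z x t * z x t * pdx z x t)) * ((Real.sqrt 3 : ℂ) * (Real.sqrt 3 : ℂ)) * Complex.I_sq
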